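/- arXiv:2603.11641 — 4 statements merged into one kernel-verified Lean document; each statement's English description precedes it below -/
import Mathlib

section
/- Let p₁, …, pₙ be nonzero elements of the field K of Hahn series with value group ℝ and coefficients in ℂ (i.e. nonzero elements of HahnSeries ℝ ℂ). Suppose the real numbers v(p₁), …, v(pₙ) are linearly independent over ℚ, where v(p) denotes the order of p, i.e. the minimum of the support of p. Then p₁, …, pₙ are algebraically independent over ℂ, where ℂ is viewed as the subfield of K consisting of constant series. -/
/-!
The monomials `∏ pᵢ ^ dᵢ` have orders `∑ dᵢ • v(pᵢ)`, which are pairwise distinct because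
the `v(pᵢ)` are `ℚ`-linearly independent. Nonzero Hahn series with pairwise distinct orders are
linearly independent, as the term of least order of a vanishing combination cannot cancel.
Hence the monomials in the `pᵢ` are linearly independent over `ℂ`, which is algebraic
independence.
-/

open Function MvPolynomial

theorem algebraicIndependent_of_linearIndependent_aeval_monomial {ι R A : Type*} [CommRing R]
    [CommRing A] [Algebra R A] {x : ι → A}
    (h : LinearIndependent R fun d : ι →₀ ℕ => aeval x (monomial d (1 : R))) :
    AlgebraicIndependent R x := by
  have hconstr : (aeval x).toLinearMap =
      (basisMonomials ι R).constr R fun d => aeval x (monomial d (1 : R)) :=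
    (basisMonomials ι R).ext fun d => by rw [Module.Basis.constr_basis]; rfl
  rw [algebraicIndependent_iff_injective_aeval, ← AlgHom.coe_toLinearMap, hconstr]
  exact (basisMonomials ι R).injective_constr_of_linearIndependent h

namespace HahnSeries

variable {Γ R ι : Type*}

theorem linearIndependent_of_injective_order [LinearOrder Γ] [Zero Γ] [Ring R] [NoZeroDivisors R]
    {x : ι → HahnSeries Γ R} (hx : ∀ i, x i ≠ 0) (hinj : Injective fun i => (x i).order) :
    LinearIndependent R x := by
  classical
  rw [linearIndependent_iff']
  intro s g hsum i hi
  by_contra hgi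
  obtain ⟨j, hj, hmin⟩ := (s.filter (g · ≠ 0)).exists_min_image (fun i => (x i).order)
    ⟨i, Finset.mem_filter.2 ⟨hi, hgi⟩⟩
  rw [Finset.mem_filter] at hj
  have hcoeff := congrArg (coeff · (x j).order) hsum
  simp only [coeff_sum, coeff_smul, smul_eq_mul, coeff_zero] at hcoeff
  rw [Finset.sum_eq_single j (fun k hk hkj => ?_) (absurd hj.1), ← leadingCoeff_eq] at hcoeff
  · exact mul_ne_zero hj.2 (leadingCoeff_ne_zero.2 (hx j)) hcoeff
  · by_cases hgk : g k = 0
    · rw [hgk, zero_mul]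
    · have hlt := (hmin k (Finset.mem_filter.2 ⟨hk, hgk⟩)).lt_of_ne fun h => hkj (hinj h).symm
      rw [coeff_eq_zero_of_lt_order hlt, mul_zero]

section OrderedCancelAddMonoid

variable [AddCommMonoid Γ] [LinearOrder Γ] [IsOrderedCancelAddMonoid Γ]

theorem order_prod [CommSemiring R] [NoZeroDivisors R] [Nontrivial R] (s : Finset ι)
    {x : ι → HahnSeries Γ R} (hx : ∀ i ∈ s, x i ≠ 0) :
    (∏ i ∈ s, x i).order = ∑ i ∈ s, (x i).order := by
  induction s using Finset.cons_induction with
  | empty => simp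
  | cons a s ha ih =>
    have hs : ∀ i ∈ s, x i ≠ 0 := fun i hi => hx i (Finset.mem_cons_of_mem hi)
    rw [Finset.prod_cons, Finset.sum_cons, order_mul (hx a (Finset.mem_cons_self a s))
      (Finset.prod_ne_zero_iff.2 hs), ih hs]

theorem order_finsuppProd_pow [CommSemiring R] [NoZeroDivisors R] [Nontrivial R]
    {x : ι → HahnSeries Γ R} (hx : ∀ i, x i ≠ 0) (d : ι →₀ ℕ) :
    (d.prod fun i k => x i ^ k).order = Finsupp.linearCombination ℕ (fun i => (x i).order) d := by
  rw [Finsupp.prod, order_prod _ fun i _ => pow_ne_zero _ (hx i), Finsupp.linearCombination_apply,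
    Finsupp.sum]
  simp only [order_pow]

theorem algebraicIndependent_of_linearIndependent_order [CommRing R] [IsDomain R]
    {x : ι → HahnSeries Γ R} (hx : ∀ i, x i ≠ 0)
    (hlin : LinearIndependent ℕ fun i => (x i).order) : AlgebraicIndependent R x := by
  apply algebraicIndependent_of_linearIndependent_aeval_monomial
  simp only [aeval_monomial, map_one, one_mul]
  refine linearIndependent_of_injective_order (fun d => ?_) (fun d e hde => hlin ?_)
  · exact Finset.prod_ne_zero_iff.2 fun i _ => pow_ne_zero _ (hx i)
  · simpa only [order_finsuppProd_pow hx] using hde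

end OrderedCancelAddMonoid

theorem powerSeriesAlgebra_eq_instAlgebra [Semiring Γ] [PartialOrder Γ] [IsStrictOrderedRing Γ]
    [CommSemiring R] : powerSeriesAlgebra Γ R (S := R) = instAlgebra :=
  Algebra.algebra_ext _ _ fun r => by
    rw [algebraMap_apply', PowerSeries.algebraMap_apply]
    simp [algebraMap_apply]

end HahnSeries

/-- A vector of nonzero Hahn series (value group `ℝ`, coefficients `ℂ`) whose
orders (valuations) are `ℚ`-linearly independent real numbers has entries that
are algebraically independent over `ℂ` (embedded as constant series). -/
theorem hahn_generic_valuation_algebraicIndependent {n : ℕ}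
    (p : Fin n → HahnSeries ℝ ℂ) (hp : ∀ i, p i ≠ 0)
    (hval : LinearIndependent ℚ (fun i => (p i).order)) :
    AlgebraicIndependent ℂ p := by
  -- instance search finds `Algebra ℂ (HahnSeries ℝ ℂ)` through the embedding of power series
  rw [HahnSeries.powerSeriesAlgebra_eq_instAlgebra]
  exact HahnSeries.algebraicIndependent_of_linearIndependent_order hp (hval.restrict_scalars' ℕ)
end

section
/- Let U and W be linear subspaces of ℝⁿ, each spanned by vectors all of whose coordinates are rational, and let c = (c₁, …, cₙ) ∈ ℝⁿ be a vector whose coordinates c₁, …, cₙ are linearly independent over ℚ. If there exists a point p ∈ ℝⁿ with p ∈ U and p − c ∈ W, then U + W = ℝⁿ. -/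
/-- If `U` and `W` are `ℚ`-rational subspaces of `ℝⁿ`, `c` has `ℚ`-linearly
independent coordinates, and some point `p` satisfies `p ∈ U` and `p - c ∈ W`,
then `U + W = ℝⁿ`. -/
theorem rational_subspaces_transversal {n : ℕ}
    (U W : Submodule ℝ (Fin n → ℝ)) (SU SW : Set (Fin n → ℝ))
    (hSU : ∀ v ∈ SU, ∀ i, ∃ q : ℚ, v i = (q : ℝ))
    (hSW : ∀ v ∈ SW, ∀ i, ∃ q : ℚ, v i = (q : ℝ))
    (hUspan : U = Submodule.span ℝ SU)
    (hWspan : W = Submodule.span ℝ SW)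
    (c : Fin n → ℝ) (hc : LinearIndependent ℚ c)
    (p : Fin n → ℝ) (hpU : p ∈ U) (hpW : p - c ∈ W) :
    U ⊔ W = ⊤ := by
  classical
  set S : Set (Fin n → ℝ) := SU ∪ SW with hSdef
  have hS : ∀ v ∈ S, ∀ i, ∃ q : ℚ, v i = (q : ℝ) := by
    rintro v (hv | hv) i
    · exact hSU v hv i
    · exact hSW v hv i
  have hVspan : U ⊔ W = Submodule.span ℝ S := by
    rw [hUspan, hWspan, hSdef, Submodule.span_union]
  have hcV : c ∈ U ⊔ W := by
    have h1 : p ∈ U ⊔ W := Submodule.mem_sup_left hpU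
    have h2 : p - c ∈ U ⊔ W := Submodule.mem_sup_right hpW
    simpa using Submodule.sub_mem _ h1 h2
  by_contra hne
  set e : (Fin n → ℚ) → (Fin n → ℝ) := fun x i => (x i : ℝ) with he
  set VQ : Submodule ℚ (Fin n → ℚ) := Submodule.span ℚ {x | e x ∈ S} with hVQ
  have key : ∀ x : Fin n → ℚ, x ∈ VQ → e x ∈ U ⊔ W := by
    intro x hx
    induction hx using Submodule.span_induction with
    | mem y hy => rw [hVspan]; exact Submodule.subset_span hy
    | zero =>
      have : e 0 = 0 := by funext i; simp [he]
      rw [this]; exact (U ⊔ W).zero_mem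
    | add a b _ _ ha hb =>
      have : e (a + b) = e a + e b := by funext i; simp [he]
      rw [this]; exact Submodule.add_mem _ ha hb
    | smul r a _ ha =>
      have : e (r • a) = (r : ℝ) • e a := by
        funext i; simp [he, Rat.smul_def]
      rw [this]; exact Submodule.smul_mem _ _ ha
  have hVQne : VQ ≠ ⊤ := by
    intro htop
    apply hne
    rw [eq_top_iff]
    intro x _
    have hx : x = ∑ i, x i • e (Pi.single i 1) := by
      funext j
      simp only [Finset.sum_apply, Pi.smul_apply, he, Pi.single_apply, smul_eq_mul,
        apply_ite (fun q : ℚ => (q : ℝ)), Rat.cast_one, Rat.cast_zero, mul_ite, mul_one,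
        mul_zero]
      rw [Finset.sum_ite_eq Finset.univ j x]
      simp
    rw [hx]
    exact Submodule.sum_mem _ fun i _ =>
      Submodule.smul_mem _ _ (key _ (htop ▸ Submodule.mem_top))
  obtain ⟨f, hf0, hfbot⟩ := VQ.exists_dual_map_eq_bot_of_lt_top hVQne.lt_top inferInstance
  set g : Fin n → ℚ := fun i => f (Pi.single i 1) with hg
  have hfeval : ∀ x : Fin n → ℚ, f x = ∑ i, x i * g i := by
    intro x
    have hx : x = ∑ i, x i • (Pi.single i 1 : Fin n → ℚ) := by
      funext j
      simp only [Finset.sum_apply, Pi.smul_apply, Pi.single_apply, smul_eq_mul, mul_ite,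
        mul_one, mul_zero]
      rw [Finset.sum_ite_eq Finset.univ j x]
      simp
    conv_lhs => rw [hx]
    simp [hg, mul_comm]
  have hfS : ∀ v ∈ S, ∑ i, (g i : ℝ) * v i = 0 := by
    intro v hv
    choose q hq using hS v hv
    have hqv : e q = v := funext fun i => (hq i).symm
    have hqVQ : q ∈ VQ := Submodule.subset_span (by simp [hqv, hv])
    have hzero : f q = 0 := by
      have : f q ∈ VQ.map f := Submodule.mem_map_of_mem hqVQ
      rwa [hfbot, Submodule.mem_bot] at this
    rw [hfeval] at hzero
    have : ((∑ i, q i * g i : ℚ) : ℝ) = 0 := by rw [hzero]; norm_num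
    rw [Rat.cast_sum] at this
    calc ∑ i, (g i : ℝ) * v i = ∑ i, ((q i * g i : ℚ) : ℝ) := by
          refine Finset.sum_congr rfl fun i _ => ?_
          rw [hq i]; push_cast; ring
      _ = 0 := this
  have hspanzero : ∀ x ∈ Submodule.span ℝ S, ∑ i, (g i : ℝ) * x i = 0 := by
    intro x hx
    induction hx using Submodule.span_induction with
    | mem y hy => exact hfS y hy
    | zero => simp
    | add a b _ _ ha hb =>
      simp only [Pi.add_apply, mul_add, Finset.sum_add_distrib, ha, hb, add_zero]
    | smul r a _ ha =>
      simp only [Pi.smul_apply, smul_eq_mul]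
      calc ∑ i, (g i : ℝ) * (r * a i) = r * ∑ i, (g i : ℝ) * a i := by
            rw [Finset.mul_sum]; exact Finset.sum_congr rfl fun i _ => by ring
        _ = 0 := by rw [ha, mul_zero]
  have hfc : ∑ i, (g i : ℝ) * c i = 0 := hspanzero c (hVspan ▸ hcV)
  have hgz : ∀ i, g i = 0 := by
    apply Fintype.linearIndependent_iff.mp hc
    calc ∑ i, g i • c i = ∑ i, (g i : ℝ) * c i := by
          refine Finset.sum_congr rfl fun i _ => ?_
          rw [Rat.smul_def]
      _ = 0 := hfc
  exact hf0 (LinearMap.ext fun x => by rw [hfeval]; simp [hgz])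
end

section
/- Let G be a finite connected simple graph with vertex set V, and let p : V → ℂ × ℂ be a placement, p v = (x_v, y_v). Suppose there exists c ∈ ℂ such that for every edge {j, k} of G one has (x_j − x_k) − i(y_j − y_k) = c·((x_j − x_k) + i(y_j − y_k)). Then all the points lie on a common affine line: there exist a, b, γ ∈ ℂ with (a, b) ≠ (0, 0) such that a·x_v + b·y_v + γ = 0 for every v ∈ V. -/
open Complex in
/-- If there is a single constant `c` such that along every edge of a connected
graph the `v`-coordinate `(x_j - x_k) - i(y_j - y_k)` equals `c` times the
`u`-coordinate `(x_j - x_k) + i(y_j - y_k)`, then the placement is collinear. -/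
theorem uv_proportional_implies_collinear {V : Type*} [Fintype V]
    (G : SimpleGraph V) (hG : G.Connected) (p : V → ℂ × ℂ) (c : ℂ)
    (h : ∀ j k : V, G.Adj j k →
      ((p j).1 - (p k).1) - I * ((p j).2 - (p k).2)
        = c * (((p j).1 - (p k).1) + I * ((p j).2 - (p k).2))) :
    ∃ a b γ : ℂ, (a, b) ≠ (0, 0) ∧ ∀ v : V, a * (p v).1 + b * (p v).2 + γ = 0 := by
  set a : ℂ := 1 - c with ha
  set b : ℂ := -(I * (1 + c)) with hb
  set f : V → ℂ := fun v => a * (p v).1 + b * (p v).2 with hf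
  have key : ∀ j k : V, G.Adj j k → f j = f k := by
    intro j k hjk
    have := h j k hjk
    simp only [hf, ha, hb]
    ring_nf
    ring_nf at this
    linear_combination this
  have const : ∀ j k : V, f j = f k := by
    intro j k
    obtain ⟨w⟩ := hG j k
    induction w with
    | nil => rfl
    | cons hadj _ ih => exact (key _ _ hadj).trans ih
  have : Nonempty V := hG.nonempty
  obtain ⟨v0⟩ := this
  refine ⟨a, b, -f v0, ?_, ?_⟩
  · intro hab
    have h1 : a = 0 := (Prod.mk.injEq _ _ _ _ ▸ hab).1
    have h2 : b = 0 := (Prod.mk.injEq _ _ _ _ ▸ hab).2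
    rw [ha] at h1
    rw [hb] at h2
    have hc1 : c = 1 := by linear_combination -h1
    have : I * (1 + c) = 0 := by linear_combination -h2
    rw [hc1] at this
    simp [I_ne_zero] at this
  · intro v
    have := const v v0
    simp only [hf] at this
    linear_combination this
end

section
/- Let G be a finite connected simple graph with vertex set V, let v₀ ∈ V, and let p : V → ℂ × ℂ be a placement with p(v₀) = (0, 0), writing p v = (x_v, y_v). Assume that for every edge {j, k} both u_{jk} = (x_j − x_k) + i(y_j − y_k) and v_{jk} = (x_j − x_k) − i(y_j − y_k) are nonzero. Then the following are equivalent: (1) there exists θ ∈ ℂ, θ ≠ 0, such that v_{jk} = θ·u_{jk} for every edge {j, k} of G; (2) all points lie on a common line through the origin, i.e. there exist a, b ∈ ℂ with (a, b) ≠ (0, 0) such that a·x_v + b·y_v = 0 for every v ∈ V. -/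
open Complex in
/-- For a placement of a finite connected simple graph pinned at the origin whose
edge coordinates `u_{jk}` and `v_{jk}` are all nonzero, there exists `θ ≠ 0` with
`v_{jk} = θ · u_{jk}` on every edge if and only if all the points lie on a common
line through the origin. -/
theorem reflection_equivalent_iff_collinear {V : Type*} [Fintype V]
    (G : SimpleGraph V) (hG : G.Connected) (v₀ : V)
    (p : V → ℂ × ℂ) (h₀ : p v₀ = (0, 0))
    (hu : ∀ j k : V, G.Adj j k →
      ((p j).1 - (p k).1) + I * ((p j).2 - (p k).2) ≠ 0)
    (hv : ∀ j k : V, G.Adj j k →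
      ((p j).1 - (p k).1) - I * ((p j).2 - (p k).2) ≠ 0) :
    (∃ θ : ℂ, θ ≠ 0 ∧ ∀ j k : V, G.Adj j k →
        ((p j).1 - (p k).1) - I * ((p j).2 - (p k).2)
          = θ * (((p j).1 - (p k).1) + I * ((p j).2 - (p k).2)))
      ↔ ∃ a b : ℂ, (a, b) ≠ (0, 0) ∧ ∀ v : V, a * (p v).1 + b * (p v).2 = 0 := by
  constructor
  · rintro ⟨θ, hθ0, hθ⟩
    set f : V → ℂ := fun v => ((p v).1 - I * (p v).2) - θ * ((p v).1 + I * (p v).2)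
      with hf
    have key : ∀ j k : V, G.Walk j k → f j = 0 → f k = 0 := by
      intro j k w
      induction w with
      | nil => exact id
      | cons hadj w ih =>
        intro hj
        apply ih
        have h2 := hθ _ _ hadj
        simp only [hf] at hj ⊢
        linear_combination hj - h2
    have hall : ∀ v, f v = 0 := by
      intro v
      obtain ⟨w⟩ := hG.preconnected v₀ v
      exact key v₀ v w (by simp [hf, h₀])
    refine ⟨1 - θ, -(1 + θ) * I, ?_, ?_⟩
    · intro hab
      rw [Prod.mk.injEq] at hab
      have h1 : θ = 1 := by linear_combination -hab.1
      have h2 : (1 + θ) * I = 0 := by linear_combination -hab.2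
      rw [h1] at h2
      simp [I_ne_zero] at h2
    · intro v
      have hv' := hall v
      simp only [hf] at hv'
      linear_combination hv'
  · rintro ⟨a, b, hab, hline⟩
    by_cases hE : ∃ j k, G.Adj j k
    · obtain ⟨j₀, k₀, he⟩ := hE
      set U₀ : ℂ := ((p j₀).1 - (p k₀).1) + I * ((p j₀).2 - (p k₀).2) with hU₀
      set V₀ : ℂ := ((p j₀).1 - (p k₀).1) - I * ((p j₀).2 - (p k₀).2) with hV₀
      have hU₀0 : U₀ ≠ 0 := hu _ _ he
      have hV₀0 : V₀ ≠ 0 := hv _ _ he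
      refine ⟨V₀ / U₀, div_ne_zero hV₀0 hU₀0, ?_⟩
      intro j k hjk
      rw [div_mul_eq_mul_div, eq_div_iff hU₀0]
      by_cases ha : a = 0
      · have hb : b ≠ 0 := by
          rintro hb
          exact hab (by simp [ha, hb, Prod.ext_iff])
        have hy : ∀ v, (p v).2 = 0 := by
          intro v
          have h := hline v
          rw [ha, zero_mul, zero_add] at h
          exact (mul_eq_zero.mp h).resolve_left hb
        simp only [hU₀, hV₀, hy, sub_zero, mul_zero, add_zero]
        ring
      · have hx : ∀ v, (p v).1 = -(b / a) * (p v).2 := by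
          intro v
          have h := hline v
          field_simp
          linear_combination h
        simp only [hU₀, hV₀, hx j, hx k, hx j₀, hx k₀]
        ring
    · push_neg at hE
      exact ⟨1, one_ne_zero, fun j k h => absurd h (hE j k)⟩
end
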